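/- arXiv:1011.5897 — 7 statements merged into one kernel-verified Lean document; each statement's English description precedes it below -/
import Mathlib

section
/- Let N ≥ 1 be an integer. For j = 1, …, N let a_j, b_j, c_j, d_j be complex numbers, and for nonzero complex numbers e_1, …, e_N define the 2×2 matrices Δ_j = [[a_j, b_j·e_j],[c_j·e_j^{-1}, d_j]]. Then there exist complex numbers A_J, B_J, C_J, D_J, indexed by the strictly increasing even-length tuples J = (j_1 < j_2 < ⋯ < j_{2a}) with entries in {1,…,N} and 0 ≤ a ≤ ⌊N/2⌋ (a = 0 giving the empty tuple), which depend only on N and on the numbers a_k, b_k, c_k, d_k (1 ≤ k ≤ N) and NOT on e_1, …, e_N, such that for every choice of nonzero e_1, …, e_N one has the expansion Δ_N·Δ_{N−1}⋯Δ_1 = Σ_{a=0}^{⌊N/2⌋} Σ_{J ∈ B_{a;N}} [[A_J, e_N·B_J],[e_N^{-1}·C_J, D_J]] · diag(ρ_J, ρ_J^{-1}), where ρ_J = (e_{j_2}·e_{j_4}⋯e_{j_{2a}})/(e_{j_1}·e_{j_3}⋯e_{j_{2a−1}}) (and ρ_J = 1 for the empty tuple). -/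
/-!
Induct on the number of factors, adding the factor `Δ_m` with the new largest index `m` on the
left; let `k` be the previous largest index. Each entry of `Δ_m · [[A, e_k B], [e_k⁻¹ C, D]]` is a
sum of two products: one involving `A` or `D` and free of `e_k`, one involving `B` or `C` and
carrying `e_k^{±1}`. The first products form a matrix `[[A', e_m B'], [e_m⁻¹ C', D']]`, keeping
`ρ_J`; the second ones form such a matrix times `diag(e_m / e_k, e_k / e_m)`, which turns `ρ_J`
into `ρ` of `J ∆ {k, m}`. For `J` ranging over the even subsets of the old indices, the sets `J`
and `J ∆ {k, m}` enumerate the even subsets of the new ones exactly once, so the new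
coefficients are explicit in the old ones and `a_m, b_m, c_m, d_m`.
-/

/-- The alternating product `ρ_J = (e_{j₂}·e_{j₄}⋯)/(e_{j₁}·e_{j₃}⋯)` attached to a
finite set `S` of indices, listed in increasing order. -/
noncomputable def rhoFactor {N : ℕ} (e : Fin N → ℂ) (S : Finset (Fin N)) : ℂ :=
  ((((S.sort (· ≤ ·)).zipIdx).map Prod.swap).map
    (fun p => if p.1 % 2 = 1 then e p.2 else (e p.2)⁻¹)).prod

open Finset Matrix

variable {K : Type*} [Field K] {α : Type*} [LinearOrder α]

theorem Finset.even_card_symmDiff_iff {β : Type*} [DecidableEq β] (s t : Finset β) :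
    Even #(symmDiff s t) ↔ (Even #s ↔ Even #t) := by
  have hcard : #(symmDiff s t) + 2 * #(s ∩ t) = #s + #t := by
    have := card_le_card (inter_subset_union (s := s) (t := t))
    rw [symmDiff_eq_sup_sdiff_inf, sup_eq_union, inf_eq_inter,
      card_sdiff_of_subset inter_subset_union, ← card_union_add_card_inter s t]
    omega
  rw [← Nat.even_add, ← hcard]
  simp [Nat.even_add]

theorem Finset.sort_insert_of_forall_lt {s : Finset α} {m : α} (h : ∀ x ∈ s, x < m) :
    (insert m s).sort (· ≤ ·) = s.sort (· ≤ ·) ++ [m] :=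
  (insert m s).sortedLT_sort.eq_of_mem_iff
    (List.sortedLT_iff_pairwise.2 <| List.pairwise_append.2
      ⟨s.sortedLT_sort.pairwise, by simp, by simpa using h⟩)
    (by simp [or_comm])

/-- `rhoFactor` for an arbitrary linearly ordered index type, so that the induction can run over
finsets of indices. -/
noncomputable def altRatio (e : α → K) (S : Finset α) : K :=
  ((((S.sort (· ≤ ·)).zipIdx).map Prod.swap).map
    (fun p => if p.1 % 2 = 1 then e p.2 else (e p.2)⁻¹)).prod

theorem altRatio_empty (e : α → K) : altRatio e ∅ = 1 := by simp [altRatio]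

theorem altRatio_insert_of_forall_lt (e : α → K) {S : Finset α} {m : α} (h : ∀ x ∈ S, x < m) :
    altRatio e (insert m S) = altRatio e S * if Even #S then (e m)⁻¹ else e m := by
  rcases Nat.mod_two_eq_zero_or_one #S with hS | hS <;>
    simp [altRatio, sort_insert_of_forall_lt h, List.zipIdx_append, Nat.even_iff, hS]

theorem altRatio_symmDiff_pair {e : α → K} {S : Finset α} {k m : α} (hek : e k ≠ 0)
    (hS : ∀ x ∈ S, x ≤ k) (hkm : k < m) (hev : Even #S) :
    altRatio e (symmDiff S {k, m}) = altRatio e S * (e k)⁻¹ * e m := by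
  have hmS : m ∉ S := fun h => (hS m h).not_gt hkm
  by_cases hkS : k ∈ S
  · have hlt : ∀ x ∈ S.erase k, x < k := fun x hx =>
      (hS x (mem_of_mem_erase hx)).lt_of_ne (ne_of_mem_erase hx)
    have hodd : ¬ Even #(S.erase k) := by
      have := card_pos.2 ⟨k, hkS⟩
      rw [card_erase_of_mem hkS, Nat.even_sub' this]
      simpa using hev
    have hρS : altRatio e S = altRatio e (S.erase k) * e k := by
      conv_lhs => rw [← insert_erase hkS]
      rw [altRatio_insert_of_forall_lt e hlt, if_neg hodd]
    have hset : symmDiff S {k, m} = insert m (S.erase k) := by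
      ext x
      grind [mem_symmDiff]
    rw [hset, altRatio_insert_of_forall_lt e fun x hx => (hlt x hx).trans hkm, if_neg hodd, hρS]
    field_simp
  · have hlt : ∀ x ∈ S, x < k := fun x hx => (hS x hx).lt_of_ne fun h => hkS (h ▸ hx)
    have hset : symmDiff S {k, m} = insert m (insert k S) := by
      ext x
      grind [mem_symmDiff]
    have hlt' : ∀ x ∈ insert k S, x < m := by
      simpa using ⟨hkm, fun x hx => (hlt x hx).trans hkm⟩
    rw [hset, altRatio_insert_of_forall_lt e hlt', altRatio_insert_of_forall_lt e hlt,
      card_insert_of_notMem hkS, if_pos hev, if_neg (by simpa [Nat.even_add_one] using hev)]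

theorem Finset.sum_powerset_insert_filter_even {β M : Type*} [DecidableEq β] [AddCommMonoid M]
    {I : Finset β} {k m : β} (hk : k ∈ I) (hm : m ∉ I) (f : Finset β → M) :
    ∑ T ∈ (insert m I).powerset with Even #T, f T =
      ∑ S ∈ I.powerset with Even #S, (f S + f (symmDiff S {k, m})) := by
  have hkm : k ≠ m := ne_of_mem_of_not_mem hk hm
  have heven (S : Finset β) : Even #(symmDiff S {k, m}) ↔ Even #S := by
    simp [even_card_symmDiff_iff, card_pair hkm]
  have hinv (S : Finset β) : symmDiff (symmDiff S {k, m}) {k, m} = S :=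
    symmDiff_symmDiff_cancel_right _ _
  rw [sum_add_distrib, ← sum_filter_add_sum_filter_not _ (m ∉ ·), filter_filter]
  congr 1
  · refine sum_congr (ext fun T => ?_) fun _ _ => rfl
    simp only [mem_filter, mem_powerset]
    constructor
    · rintro ⟨hT, hev, hmT⟩
      exact ⟨(subset_insert_iff_of_notMem hmT).1 hT, hev⟩
    · rintro ⟨hT, hev⟩
      exact ⟨hT.trans (subset_insert _ _), hev, fun h => hm (hT h)⟩
  · refine sum_nbij' (fun T : Finset β => symmDiff T {k, m}) (fun S : Finset β => symmDiff S {k, m})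
      ?_ ?_ (fun T _ => hinv T) (fun S _ => hinv S) (fun T _ => by rw [hinv])
    · simp only [mem_filter, mem_powerset, not_not]
      rintro T ⟨⟨hTI, hev⟩, hmT⟩
      refine ⟨fun x hx => ?_, (heven T).2 hev⟩
      grind [mem_symmDiff]
    · simp only [mem_filter, mem_powerset, not_not]
      rintro S ⟨hSI, hev⟩
      refine ⟨⟨fun x hx => ?_, (heven S).2 hev⟩, ?_⟩ <;> grind [mem_symmDiff]

theorem jump_mul_term_eq_add {p q r s A B C D x y ρ : K} (hy : y ≠ 0) :
    !![p, q * y; r * y⁻¹, s] * (!![A, x * B; x⁻¹ * C, D] * diagonal ![ρ, ρ⁻¹]) =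
      !![p * A, y * (q * D); y⁻¹ * (r * A), s * D] * diagonal ![ρ, ρ⁻¹] +
      !![q * C, y * (p * B); y⁻¹ * (s * C), r * B] *
        diagonal ![ρ * x⁻¹ * y, (ρ * x⁻¹ * y)⁻¹] := by
  simp only [diagonal_vec2, mul_fin_two]
  ext i j
  fin_cases i <;> fin_cases j <;> simp <;> field_simp <;> ring

theorem exists_expansion_prod_sort_insert (a b c d : α → K) (I : Finset α) (m : α)
    (hI : ∀ x ∈ I, x < m) :
    ∃ A B C D : Finset α → K, ∀ e : α → K, (∀ j, e j ≠ 0) →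
      (((insert m I).sort (· ≤ ·)).map fun j =>
          (!![a j, b j * e j; c j * (e j)⁻¹, d j] : Matrix (Fin 2) (Fin 2) K)).reverse.prod
        = ∑ S ∈ (insert m I).powerset with Even #S,
            !![A S, e m * B S; (e m)⁻¹ * C S, D S] *
              diagonal ![altRatio e S, (altRatio e S)⁻¹] := by
  induction I using Finset.induction_on_max generalizing m with
  | empty =>
    refine ⟨fun _ => a m, fun _ => b m, fun _ => c m, fun _ => d m, fun e he => ?_⟩
    have hpow : ({m} : Finset α).powerset.filter (Even #·) = {∅} := by
      ext S; constructor <;> simp +contextual [subset_singleton_iff, or_imp]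
    rw [insert_empty_eq, hpow, sum_singleton, altRatio_empty, inv_one, diagonal_vec2,
      ← one_fin_two, Matrix.mul_one]
    simp [mul_comm]
  | insert k J hJ ih =>
    obtain ⟨A, B, C, D, hAD⟩ := ih k hJ
    have hkm : k < m := hI k (mem_insert_self k J)
    have hmI : m ∉ insert k J := fun h => (hI m h).false
    refine ⟨fun T => if m ∈ T then b m * C (symmDiff T {k, m}) else a m * A T,
      fun T => if m ∈ T then a m * B (symmDiff T {k, m}) else b m * D T,
      fun T => if m ∈ T then d m * C (symmDiff T {k, m}) else c m * A T,
      fun T => if m ∈ T then c m * B (symmDiff T {k, m}) else d m * D T, fun e he => ?_⟩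
    simp only [sort_insert_of_forall_lt hI, List.map_append, List.map_singleton,
      List.reverse_append, List.reverse_singleton, List.singleton_append, List.prod_cons]
    rw [hAD e he, mul_sum, sum_powerset_insert_filter_even (mem_insert_self k J) hmI]
    refine sum_congr rfl fun S hS => ?_
    obtain ⟨hSI, hev⟩ := mem_filter.1 hS
    have hSk : ∀ x ∈ S, x ≤ k := fun x hx => by
      rcases mem_insert.1 (mem_powerset.1 hSI hx) with rfl | hxJ
      exacts [le_rfl, (hJ x hxJ).le]
    have hmS : m ∉ S := fun h => hmI (mem_powerset.1 hSI h)
    have hmS' : m ∈ symmDiff S {k, m} := by simp [mem_symmDiff, hmS]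
    simp only [hmS, hmS', if_true, if_false, symmDiff_symmDiff_cancel_right,
      altRatio_symmDiff_pair (he k) hSk hkm hev]
    exact jump_mul_term_eq_add (he m)

theorem rhoFactor_eq_altRatio {N : ℕ} (e : Fin N → ℂ) (S : Finset (Fin N)) :
    rhoFactor e S = altRatio e S := rfl

/-- Lemma B.1: the product `Δ_N ⋯ Δ_1` of matrices
`Δ_j = [[a_j, b_j e_j],[c_j e_j⁻¹, d_j]]` expands as a sum, over strictly increasing
even-length tuples `J` (i.e. even-cardinality subsets `S` of indices), of
`[[A_J, e_N B_J],[e_N⁻¹ C_J, D_J]] · diag(ρ_J, ρ_J⁻¹)` with coefficients independent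
of `e₁,…,e_N`. -/
theorem statement0 (N : ℕ) (hN : 1 ≤ N) (a b c d : Fin N → ℂ) :
    ∃ A B C D : Finset (Fin N) → ℂ,
      ∀ e : Fin N → ℂ, (∀ j, e j ≠ 0) →
        (List.ofFn (fun j : Fin N =>
          (!![a j, b j * e j; c j * (e j)⁻¹, d j] : Matrix (Fin 2) (Fin 2) ℂ))).reverse.prod
        = ∑ S ∈ Finset.univ.filter (fun S : Finset (Fin N) => Even S.card),
            (!![A S, e ⟨N - 1, by omega⟩ * B S;
                (e ⟨N - 1, by omega⟩)⁻¹ * C S, D S] : Matrix (Fin 2) (Fin 2) ℂ) *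
              Matrix.diagonal ![rhoFactor e S, (rhoFactor e S)⁻¹] := by
  set last : Fin N := ⟨N - 1, by omega⟩
  have hlt : ∀ x ∈ univ.erase last, x < last := fun x hx =>
    (Fin.le_def.2 (Nat.le_sub_one_of_lt x.isLt)).lt_of_ne (ne_of_mem_erase hx)
  obtain ⟨A, B, C, D, hAD⟩ := exists_expansion_prod_sort_insert a b c d _ last hlt
  refine ⟨A, B, C, D, fun e he => ?_⟩
  simpa [insert_erase (mem_univ last), Fin.sort_univ, List.ofFn_eq_map, rhoFactor_eq_altRatio]
    using hAD e he
end

section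
/- Let ν, e, c₊, c₋ be complex numbers with e ≠ 0, sin(πν) ≠ 0, and c₊ − c₋ = e^{−2}. Define E = i·e·( i(c₊+c₋)/2 + e^{−2}·cot(πν)/2 ), and define the 2×2 matrix G_χ = I₂ + 4 sin²(πν) · [[−E·e, E²],[−e², e·E]]. Then (I₂ + c₊·σ⁺) · G_χ · (I₂ − c₋·σ⁺) = [[exp(−2iπν), 0],[exp(2iπν)·e²·(exp(−2iπν)−1)², exp(2iπν)]]; in particular the conjugated jump matrix is lower triangular with the indicated diagonal and lower-left entry. -/
/-!
Write `θ = πν`, `s = sin θ`, `c = cos θ`. The matrix `[[-E e, E²], [-e², e E]]` is the rank-one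
product `(E, e)ᵀ (-e, E)`, so conjugating `I₂ + 4 s² (E, e)ᵀ (-e, E)` by the unipotent factors only
shifts `E` to `E + c₊ e` and `E + c₋ e`. The choice of `E` together with `c₊ - c₋ = e⁻²` makes these
`(± 1 + i c / s) / (2 e)`, and the entries collapse to `1 - 2 s² ∓ 2 i s c = exp (∓ 2 i θ)`,
`e⁻² (1 - c² - s²) = 0` and `-4 s² e²`.
-/

open Complex

theorem upperUnipotent_mul_one_add_smul_mul_upperUnipotent {R : Type*} [CommRing R]
    (a b k E e : R) :
    ((1 : Matrix (Fin 2) (Fin 2) R) + a • !![0, 1; 0, 0]) *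
      ((1 : Matrix (Fin 2) (Fin 2) R) + k • !![-(E * e), E ^ 2; -(e ^ 2), e * E]) *
      ((1 : Matrix (Fin 2) (Fin 2) R) - b • !![0, 1; 0, 0])
    = !![1 - k * e * (E + a * e), (a - b) + k * (E + a * e) * (E + b * e);
         -(k * e ^ 2), 1 + k * e * (E + b * e)] := by
  ext i j
  fin_cases i <;> fin_cases j <;>
    simp [Matrix.mul_apply, Fin.sum_univ_two, Matrix.one_apply] <;> ring

theorem Complex.exp_two_mul_mul_I (x : ℂ) :
    exp (2 * x * I) = 1 - 2 * sin x ^ 2 + 2 * I * sin x * cos x := by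
  rw [exp_mul_I, cos_two_mul, sin_two_mul, cos_sq']
  ring

theorem Complex.exp_neg_two_mul_mul_I (x : ℂ) :
    exp (-(2 * x * I)) = 1 - 2 * sin x ^ 2 - 2 * I * sin x * cos x := by
  rw [show -(2 * x * I) = 2 * (-x) * I by ring, exp_two_mul_mul_I, sin_neg, cos_neg]
  ring

theorem Complex.exp_two_mul_mul_I_mul_sub_one_sq (x : ℂ) :
    exp (2 * x * I) * (exp (-(2 * x * I)) - 1) ^ 2 = -(4 * sin x ^ 2) := by
  have hinv : exp (2 * x * I) * exp (-(2 * x * I)) = 1 := by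
    rw [← exp_add, add_neg_cancel, exp_zero]
  linear_combination (exp (-(2 * x * I)) - 2) * hinv + exp_two_mul_mul_I x
    + exp_neg_two_mul_mul_I x

/-- The algebraic core of the first transformation of the RHP: conjugating the jump
matrix `G_χ` by `I₂ + c₊ σ⁺` on the left and `I₂ - c₋ σ⁺` on the right yields a lower
triangular matrix. -/
theorem statement2 (ν e cp cm : ℂ) (he : e ≠ 0)
    (hsin : Complex.sin ((Real.pi : ℂ) * ν) ≠ 0)
    (hjump : cp - cm = e ^ (-2 : ℤ))
    (E : ℂ)
    (hE : E = Complex.I * e * (Complex.I * (cp + cm) / 2 +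
      e ^ (-2 : ℤ) *
        (Complex.cos ((Real.pi : ℂ) * ν) / Complex.sin ((Real.pi : ℂ) * ν)) / 2)) :
    ((1 : Matrix (Fin 2) (Fin 2) ℂ) + cp • !![0, 1; 0, 0]) *
      ((1 : Matrix (Fin 2) (Fin 2) ℂ) +
        (4 * Complex.sin ((Real.pi : ℂ) * ν) ^ 2) •
          !![-(E * e), E ^ 2; -(e ^ 2), e * E]) *
      ((1 : Matrix (Fin 2) (Fin 2) ℂ) - cm • !![0, 1; 0, 0])
    = !![Complex.exp (-(2 * (Real.pi : ℂ) * Complex.I * ν)), 0;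
         Complex.exp (2 * (Real.pi : ℂ) * Complex.I * ν) * e ^ 2 *
           (Complex.exp (-(2 * (Real.pi : ℂ) * Complex.I * ν)) - 1) ^ 2,
         Complex.exp (2 * (Real.pi : ℂ) * Complex.I * ν)] := by
  rw [show 2 * (Real.pi : ℂ) * I * ν = 2 * (Real.pi * ν) * I by ring]
  set θ := (Real.pi : ℂ) * ν
  rw [zpow_neg, zpow_two] at hjump hE
  have hjump' : e ^ 2 * (cp - cm) = 1 := by rw [hjump]; field_simp
  have hEp : E + cp * e = (1 + I * cos θ / sin θ) / (2 * e) := by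
    rw [hE]; field_simp
    linear_combination (e ^ 2 * (cp + cm) * sin θ) * I_sq + sin θ * hjump'
  have hEm : E + cm * e = (-1 + I * cos θ / sin θ) / (2 * e) := by
    rw [hE]; field_simp
    linear_combination (e ^ 2 * (cp + cm) * sin θ) * I_sq - sin θ * hjump'
  rw [upperUnipotent_mul_one_add_smul_mul_upperUnipotent, hEp, hEm, hjump,
    mul_right_comm (exp _), exp_two_mul_mul_I_mul_sub_one_sq,
    exp_neg_two_mul_mul_I, exp_two_mul_mul_I]
  ext i j
  fin_cases i <;> fin_cases j <;>
    simp only [Fin.zero_eta, Fin.mk_one, Fin.isValue, Matrix.of_apply, Matrix.cons_val',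
      Matrix.cons_val_zero, Matrix.cons_val_one, Matrix.cons_val_fin_one] <;> field_simp
  · ring
  · linear_combination 4 * cos θ ^ 2 * I_sq - 4 * sin_sq_add_cos_sq θ
  · ring
end

section
/- Let q > 0, let U ⊆ ℂ be open with [−q,q] ⊂ U, and let ν : ℂ → ℂ be holomorphic on U. For λ ∈ U \ [−q,q] define κ(λ) = exp( −∫_{−q}^{q} (ν(λ)−ν(μ))/(λ−μ) dμ ) and α(λ) = κ(λ) · exp( ν(λ) · Log((λ+q)/(λ−q)) ), where Log is the principal branch of the complex logarithm. Then for every t ∈ (−q,q) the one-sided limits α₊(t) = lim_{ε→0⁺} α(t+iε) and α₋(t) = lim_{ε→0⁺} α(t−iε) both exist, and they satisfy the jump relation α₊(t) · exp(2iπν(t)) = α₋(t). -/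
/-!
Since `ν` is holomorphic, it is Lipschitz on a compact neighbourhood of `[-q, q] ∪ {t}` inside
`U`, so the difference quotients in the integral defining `κ` are uniformly bounded and dominated
convergence makes `κ` continuous at `t`: it has no jump. The Möbius map `λ ↦ (λ+q)/(λ-q)` sends
`t ± iε` to the lower/upper side of the negative real axis, where `Log` jumps by `2πi`.
-/

open Set Filter MeasureTheory Metric Complex Topology
open scoped Interval

lemma DifferentiableOn.locallyLipschitzOn_of_isOpen {E : Type*} [NormedAddCommGroup E]
    [NormedSpace ℂ E] [CompleteSpace E] {f : ℂ → E} {U : Set ℂ}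
    (hf : DifferentiableOn ℂ f U) (hU : IsOpen U) : LocallyLipschitzOn U f := fun x hx => by
  obtain ⟨K, s, hs, hK⟩ :=
    ((hf.analyticAt (hU.mem_nhds hx)).contDiffAt (n := 1)).exists_lipschitzOnWith
  exact ⟨K, s, mem_nhdsWithin_of_mem_nhds hs, hK⟩

lemma LipschitzOnWith.norm_div_sub_le {𝕜 : Type*} [NormedField 𝕜] {f : 𝕜 → 𝕜} {s : Set 𝕜}
    {C : NNReal} (hf : LipschitzOnWith C f s) {x y : 𝕜} (hx : x ∈ s) (hy : y ∈ s) :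
    ‖(f x - f y) / (x - y)‖ ≤ C := by
  rcases eq_or_ne x y with rfl | hxy
  · simp
  rw [norm_div, div_le_iff₀ (norm_pos_iff.2 (sub_ne_zero.2 hxy))]
  simpa only [dist_eq_norm] using lipschitzOnWith_iff_dist_le_mul.1 hf x hx y hy

theorem continuousAt_intervalIntegral_div_sub {ν : ℂ → ℂ} {U : Set ℂ} (hU : IsOpen U)
    (hν : DifferentiableOn ℂ ν U) {a b : ℝ} (hab : (fun x : ℝ => (x : ℂ)) '' [[a, b]] ⊆ U)
    {z : ℂ} (hz : z ∈ U) :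
    ContinuousAt (fun lam : ℂ => ∫ μ in a..b, (ν lam - ν μ) / (lam - μ)) z := by
  obtain ⟨r, hr, hrU⟩ := nhds_basis_closedBall.mem_iff.1 (hU.mem_nhds hz)
  have hK : IsCompact ((fun x : ℝ => (x : ℂ)) '' [[a, b]] ∪ closedBall z r) :=
    (isCompact_uIcc.image continuous_ofReal).union (isCompact_closedBall z r)
  obtain ⟨C, hC⟩ := ((hν.locallyLipschitzOn_of_isOpen hU).mono
    (union_subset hab hrU)).exists_lipschitzOnWith_of_compact hK
  have hreal : ∀ μ ∈ Ι a b, (μ : ℂ) ∈ (fun x : ℝ => (x : ℂ)) '' [[a, b]] :=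
    fun μ hμ => mem_image_of_mem _ (uIoc_subset_uIcc hμ)
  refine intervalIntegral.continuousAt_of_dominated_interval (bound := fun _ => (C : ℝ))
    (Eventually.of_forall fun lam => ?_) ?_ intervalIntegrable_const ?_
  · have hνμ : ContinuousOn (fun μ : ℝ => ν μ) (Ι a b) :=
      hν.continuousOn.comp continuous_ofReal.continuousOn fun μ hμ => hab (hreal μ hμ)
    simpa [div_eq_mul_inv, Pi.mul_def] using
      ((continuousOn_const.sub hνμ).aestronglyMeasurable measurableSet_uIoc).mul
        ((measurable_const.sub measurable_ofReal).inv.aestronglyMeasurable)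
  · filter_upwards [closedBall_mem_nhds z hr] with lam hlam
    exact ae_of_all _ fun μ hμ =>
      hC.norm_div_sub_le (Or.inr hlam) (Or.inl (hreal μ hμ))
  · filter_upwards [Measure.ae_ne volume z.re] with μ hμ _
    have hzμ : z - μ ≠ 0 := sub_ne_zero.2 fun h => hμ (by simp [h])
    exact ((hν.continuousOn.continuousAt (hU.mem_nhds hz)).sub continuousAt_const).div
      (continuousAt_id.sub continuousAt_const) hzμ

lemma im_add_div_sub_ofReal (z : ℂ) (q : ℝ) :
    ((z + q) / (z - q)).im = -(2 * q * z.im) / normSq (z - q) := by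
  simp only [div_im, add_re, add_im, sub_re, sub_im, ofReal_re, ofReal_im]
  ring

lemma tendsto_ofReal_add_mul_I_upperHalfPlane (t : ℝ) :
    Tendsto (fun ε : ℝ => (t : ℂ) + ε * I) (𝓝[>] 0) (𝓝[{z | 0 < z.im}] (t : ℂ)) := by
  refine tendsto_nhdsWithin_iff.2 ⟨?_, eventually_nhdsWithin_of_forall fun ε hε => by simpa⟩
  exact ((Continuous.tendsto (by fun_prop) 0).mono_left nhdsWithin_le_nhds).trans (by simp)

lemma tendsto_ofReal_sub_mul_I_lowerHalfPlane (t : ℝ) :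
    Tendsto (fun ε : ℝ => (t : ℂ) - ε * I) (𝓝[>] 0) (𝓝[{z | z.im < 0}] (t : ℂ)) := by
  refine tendsto_nhdsWithin_iff.2 ⟨?_, eventually_nhdsWithin_of_forall fun ε hε => by simpa⟩
  exact ((Continuous.tendsto (by fun_prop) 0).mono_left nhdsWithin_le_nhds).trans (by simp)

section Mobius

variable {q t : ℝ}

lemma add_div_sub_neg_of_mem_Ioo (ht : t ∈ Ioo (-q) q) : (t + q) / (t - q) < 0 :=
  div_neg_of_pos_of_neg (by linarith [ht.1]) (by linarith [ht.2])

lemma norm_ofReal_add_div_sub (ht : t ∈ Ioo (-q) q) :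
    ‖(((t + q) / (t - q) : ℝ) : ℂ)‖ = (q + t) / (q - t) := by
  rw [norm_real, Real.norm_of_nonpos (add_div_sub_neg_of_mem_Ioo ht).le, ← div_neg, neg_sub,
    add_comm]

lemma tendsto_add_div_sub_ofReal (ht : t ∈ Ioo (-q) q) {s : Set ℂ} :
    Tendsto (fun z : ℂ => (z + q) / (z - q)) (𝓝[s] (t : ℂ)) (𝓝 (((t + q) / (t - q) : ℝ) : ℂ)) := by
  have htq : (t : ℂ) - q ≠ 0 := by exact_mod_cast sub_ne_zero.2 ht.2.ne
  refine (((continuousAt_id.add continuousAt_const).div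
    (continuousAt_id.sub continuousAt_const) htq).tendsto.mono_left nhdsWithin_le_nhds).trans ?_
  push_cast; rfl

lemma tendsto_log_add_div_sub_upperHalfPlane (ht : t ∈ Ioo (-q) q) :
    Tendsto (fun z : ℂ => log ((z + q) / (z - q))) (𝓝[{z | 0 < z.im}] (t : ℂ))
      (𝓝 (Real.log ((q + t) / (q - t)) - Real.pi * I)) := by
  have hlog := tendsto_log_nhdsWithin_im_neg_of_re_neg_of_im_zero
    (by simpa using add_div_sub_neg_of_mem_Ioo ht) (ofReal_im _)
  rw [norm_ofReal_add_div_sub ht] at hlog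
  refine hlog.comp (tendsto_nhdsWithin_iff.2 ⟨tendsto_add_div_sub_ofReal ht,
    eventually_nhdsWithin_of_forall fun z hz => ?_⟩)
  rw [mem_ofPred_eq] at hz
  have hzq : z - q ≠ 0 := fun h => hz.ne' (by simpa using congrArg im h)
  show ((z + q) / (z - q)).im < 0
  rw [im_add_div_sub_ofReal]
  exact div_neg_of_neg_of_pos (by nlinarith [ht.1, ht.2]) (normSq_pos.2 hzq)

lemma tendsto_log_add_div_sub_lowerHalfPlane (ht : t ∈ Ioo (-q) q) :
    Tendsto (fun z : ℂ => log ((z + q) / (z - q))) (𝓝[{z | z.im < 0}] (t : ℂ))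
      (𝓝 (Real.log ((q + t) / (q - t)) + Real.pi * I)) := by
  have hlog := tendsto_log_nhdsWithin_im_nonneg_of_re_neg_of_im_zero
    (by simpa using add_div_sub_neg_of_mem_Ioo ht) (ofReal_im _)
  rw [norm_ofReal_add_div_sub ht] at hlog
  refine hlog.comp (tendsto_nhdsWithin_iff.2 ⟨tendsto_add_div_sub_ofReal ht,
    eventually_nhdsWithin_of_forall fun z hz => ?_⟩)
  rw [mem_ofPred_eq] at hz
  show 0 ≤ ((z + q) / (z - q)).im
  rw [im_add_div_sub_ofReal]
  exact div_nonneg (by nlinarith [ht.1, ht.2]) (normSq_nonneg _)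

end Mobius

theorem statement3_general (q : ℝ) (U : Set ℂ) (hU : IsOpen U)
    (hsub : (fun x : ℝ => (x : ℂ)) '' Set.Icc (-q) q ⊆ U)
    (ν : ℂ → ℂ) (hν : DifferentiableOn ℂ ν U)
    (κ α : ℂ → ℂ)
    (hκ : ∀ lam : ℂ,
      κ lam = Complex.exp (-∫ μ in (-q)..q, (ν lam - ν (μ : ℂ)) / (lam - (μ : ℂ))))
    (hα : ∀ lam : ℂ,
      α lam = κ lam * Complex.exp (ν lam * Complex.log ((lam + q) / (lam - q))))
    (t : ℝ) (ht1 : -q < t) (ht2 : t < q) :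
    ∃ ap am : ℂ,
      Filter.Tendsto (fun ε : ℝ => α ((t : ℂ) + ε * Complex.I))
        (nhdsWithin 0 (Set.Ioi 0)) (nhds ap) ∧
      Filter.Tendsto (fun ε : ℝ => α ((t : ℂ) - ε * Complex.I))
        (nhdsWithin 0 (Set.Ioi 0)) (nhds am) ∧
      ap * Complex.exp (2 * (Real.pi : ℂ) * Complex.I * ν (t : ℂ)) = am := by
  have ht : t ∈ Ioo (-q) q := ⟨ht1, ht2⟩
  have htU : (t : ℂ) ∈ U := hsub (mem_image_of_mem _ (Ioo_subset_Icc_self ht))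
  have hκt : ContinuousAt κ t := by
    rw [funext hκ]
    exact (continuousAt_intervalIntegral_div_sub hU hν
      (by rwa [uIcc_of_le (by linarith)]) htU).neg.cexp
  have hνt : ContinuousAt ν t := hν.continuousOn.continuousAt (hU.mem_nhds htU)
  have hα_tendsto : ∀ {s : Set ℂ} {L : ℂ},
      Tendsto (fun z : ℂ => log ((z + q) / (z - q))) (𝓝[s] (t : ℂ)) (𝓝 L) →
      Tendsto α (𝓝[s] (t : ℂ)) (𝓝 (κ t * exp (ν t * L))) := fun hlog => by
    rw [funext hα]
    exact (hκt.tendsto.mono_left nhdsWithin_le_nhds).mul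
      ((hνt.tendsto.mono_left nhdsWithin_le_nhds).mul hlog).cexp
  refine ⟨_, _, (hα_tendsto (tendsto_log_add_div_sub_upperHalfPlane ht)).comp
    (tendsto_ofReal_add_mul_I_upperHalfPlane t), (hα_tendsto
    (tendsto_log_add_div_sub_lowerHalfPlane ht)).comp (tendsto_ofReal_sub_mul_I_lowerHalfPlane t), ?_⟩
  rw [mul_assoc, ← exp_add]
  ring_nf

/-- The jump relation `α₊(t) · e^{2iπν(t)} = α₋(t)` across `(-q,q)` for the function
`α(λ) = κ(λ) · ((λ+q)/(λ-q))^{ν(λ)}` (principal branch). -/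
theorem statement3 (q : ℝ) (hq : 0 < q) (U : Set ℂ) (hU : IsOpen U)
    (hsub : (fun x : ℝ => (x : ℂ)) '' Set.Icc (-q) q ⊆ U)
    (ν : ℂ → ℂ) (hν : DifferentiableOn ℂ ν U)
    (κ α : ℂ → ℂ)
    (hκ : ∀ lam : ℂ,
      κ lam = Complex.exp (-∫ μ in (-q)..q, (ν lam - ν (μ : ℂ)) / (lam - (μ : ℂ))))
    (hα : ∀ lam : ℂ,
      α lam = κ lam * Complex.exp (ν lam * Complex.log ((lam + q) / (lam - q))))
    (t : ℝ) (ht1 : -q < t) (ht2 : t < q) :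
    ∃ ap am : ℂ,
      Filter.Tendsto (fun ε : ℝ => α ((t : ℂ) + ε * Complex.I))
        (nhdsWithin 0 (Set.Ioi 0)) (nhds ap) ∧
      Filter.Tendsto (fun ε : ℝ => α ((t : ℂ) - ε * Complex.I))
        (nhdsWithin 0 (Set.Ioi 0)) (nhds am) ∧
      ap * Complex.exp (2 * (Real.pi : ℂ) * Complex.I * ν (t : ℂ)) = am :=
  statement3_general q U hU hsub ν hν κ α hκ hα t ht1 ht2
end

section
/- Let λ ∈ ℂ. Let α, c : ℂ → ℂ and Π : ℂ → M₂(ℂ) be complex-differentiable at λ, with α(λ) ≠ 0 and Π(λ) invertible. Define χ(z) = Π(z) · diag(α(z)^{−1}, α(z)) · (I₂ + c(z)·σ⁺). Then χ(λ) is invertible and tr( χ′(λ) · (σ₃ + 2c(λ)·σ⁺) · χ(λ)^{−1} ) = tr( Π′(λ) · σ₃ · Π(λ)^{−1} ) − 2·α′(λ)/α(λ). -/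
/-!
Write `χ = Π · D · U` with `D = α^{-σ₃}` and `U = I₂ + c σ⁺`. Since `σ₃ + 2cσ⁺ = U⁻¹ σ₃ U` and `D`
commutes with `σ₃`, expanding `χ'` by the product rule splits the trace into
`tr(Π' σ₃ Π⁻¹) + tr(D' σ₃ D⁻¹) + tr(U' (σ₃ + 2cσ⁺) U⁻¹)`. The middle term is `-2α'/α` because
`D' = -(α'/α) σ₃ D`, and the last vanishes because `U' = c' σ⁺` and `σ⁺ (σ₃ + 2cσ⁺) U⁻¹ = -σ⁺`.
-/

open Matrix

namespace Matrix

variable {𝕜 : Type*} [NontriviallyNormedField 𝕜] {l m n : Type*} [Fintype m]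

noncomputable def entrywiseDeriv (M : 𝕜 → Matrix l n 𝕜) (x : 𝕜) : Matrix l n 𝕜 :=
  of fun i j => deriv (fun z => M z i j) x

def EntrywiseDifferentiableAt (M : 𝕜 → Matrix l n 𝕜) (x : 𝕜) : Prop :=
  ∀ i j, DifferentiableAt 𝕜 (fun z => M z i j) x

variable {M : 𝕜 → Matrix l m 𝕜} {N : 𝕜 → Matrix m n 𝕜} {x : 𝕜}

theorem EntrywiseDifferentiableAt.mul (hM : EntrywiseDifferentiableAt M x)
    (hN : EntrywiseDifferentiableAt N x) : EntrywiseDifferentiableAt (fun z => M z * N z) x :=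
  fun i j => by
    simp only [mul_apply]
    exact DifferentiableAt.fun_sum fun k _ => (hM i k).fun_mul (hN k j)

theorem entrywiseDeriv_mul (hM : EntrywiseDifferentiableAt M x)
    (hN : EntrywiseDifferentiableAt N x) :
    entrywiseDeriv (fun z => M z * N z) x
      = entrywiseDeriv M x * N x + M x * entrywiseDeriv N x := by
  ext i j
  simp only [entrywiseDeriv, mul_apply, of_apply, add_apply, ← Finset.sum_add_distrib]
  rw [deriv_fun_sum fun k _ => (hM i k).fun_mul (hN k j)]
  exact Finset.sum_congr rfl fun k _ => deriv_fun_mul (hM i k) (hN k j)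

theorem trace_productRule_mul_inv {R : Type*} [CommRing R] [Fintype n] [DecidableEq n]
    {P D U : Matrix n n R} (P' D' U' S T : Matrix n n R)
    (hP : IsUnit P) (hD : IsUnit D) (hU : IsUnit U)
    (hS : U * S = T * U) (hT : D * T = T * D) :
    trace ((P' * D * U + P * D' * U + P * D * U') * S * (P * D * U)⁻¹)
      = trace (P' * T * P⁻¹) + trace (D' * T * D⁻¹) + trace (U' * S * U⁻¹) := by
  have hUS : U * S * U⁻¹ = T := by
    rw [hS, Matrix.mul_assoc, mul_nonsing_inv _ ((isUnit_iff_isUnit_det U).1 hU), Matrix.mul_one]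
  have hDT : D * T * D⁻¹ = T := by
    rw [hT, Matrix.mul_assoc, mul_nonsing_inv _ ((isUnit_iff_isUnit_det D).1 hD), Matrix.mul_one]
  have hPD : (P * D)⁻¹ = D⁻¹ * P⁻¹ := mul_inv_rev P D
  have hPDU : (P * D * U)⁻¹ = U⁻¹ * D⁻¹ * P⁻¹ := by rw [mul_inv_rev, hPD, Matrix.mul_assoc]
  have hP' : P' * D * U * S * (U⁻¹ * D⁻¹ * P⁻¹) = P' * T * P⁻¹ := by
    calc P' * D * U * S * (U⁻¹ * D⁻¹ * P⁻¹) = P' * (D * (U * S * U⁻¹) * D⁻¹) * P⁻¹ := by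
          simp only [Matrix.mul_assoc]
      _ = P' * T * P⁻¹ := by rw [hUS, hDT]
  have hD' : trace (P * D' * U * S * (U⁻¹ * D⁻¹ * P⁻¹)) = trace (D' * T * D⁻¹) := by
    calc trace (P * D' * U * S * (U⁻¹ * D⁻¹ * P⁻¹))
        = trace (P * (D' * (U * S * U⁻¹) * D⁻¹) * P⁻¹) := by simp only [Matrix.mul_assoc]
      _ = trace (D' * T * D⁻¹) := by rw [trace_conj hP, hUS]
  have hU' : trace (P * D * U' * S * (U⁻¹ * D⁻¹ * P⁻¹)) = trace (U' * S * U⁻¹) := by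
    calc trace (P * D * U' * S * (U⁻¹ * D⁻¹ * P⁻¹))
        = trace (P * D * (U' * S * U⁻¹) * (P * D)⁻¹) := by simp only [hPD, Matrix.mul_assoc]
      _ = trace (U' * S * U⁻¹) := trace_conj (hP.mul hD) _
  rw [hPDU, Matrix.add_mul, Matrix.add_mul, Matrix.add_mul, Matrix.add_mul, trace_add, trace_add,
    hP', hD', hU']

section Field

variable {K : Type*} [Field K]

theorem isUnit_diagonal_inv_self {a : K} (ha : a ≠ 0) : IsUnit (diagonal ![a⁻¹, a]) := by
  simp [isUnit_iff_isUnit_det, ha]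

theorem isUnit_one_add_smul_sigmaPlus (c : K) : IsUnit (1 + c • !![(0 : K), 1; 0, 0]) := by
  simp [isUnit_iff_isUnit_det, det_fin_two]

theorem diagonal_mul_sigma3_comm (d : Fin 2 → K) :
    diagonal d * !![1, 0; 0, -1] = !![1, 0; 0, -1] * diagonal d := by
  ext i j; fin_cases i <;> fin_cases j <;> simp

theorem one_add_smul_sigmaPlus_mul (c : K) :
    (1 + c • !![0, 1; 0, 0]) * (!![1, 0; 0, -1] + (2 * c) • !![0, 1; 0, 0])
      = !![1, 0; 0, -1] * (1 + c • !![(0 : K), 1; 0, 0]) := by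
  rw [one_fin_two]
  simp
  ring

theorem inv_diagonal_inv_self {a : K} (ha : a ≠ 0) :
    (diagonal ![a⁻¹, a])⁻¹ = diagonal ![a, a⁻¹] := by
  refine inv_eq_right_inv ?_
  rw [diagonal_mul_diagonal, ← diagonal_one]
  congr 1
  ext i; fin_cases i <;> simp [ha]

theorem inv_one_add_smul_sigmaPlus (c : K) :
    (1 + c • !![(0 : K), 1; 0, 0])⁻¹ = 1 - c • !![(0 : K), 1; 0, 0] := by
  refine inv_eq_right_inv ?_
  rw [one_fin_two]
  simp

theorem trace_diagonal_mul_sigma3_mul_inv {a : K} (ha : a ≠ 0) (a' : K) :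
    trace (diagonal ![-a' / a ^ 2, a'] * !![1, 0; 0, -1] * (diagonal ![a⁻¹, a])⁻¹)
      = -2 * a' / a := by
  rw [inv_diagonal_inv_self ha]
  simp [trace_fin_two]
  field_simp
  ring

theorem trace_smul_sigmaPlus_mul_mul_inv (c c' : K) :
    trace ((c' • !![0, 1; 0, 0]) * (!![1, 0; 0, -1] + (2 * c) • !![0, 1; 0, 0])
      * (1 + c • !![(0 : K), 1; 0, 0])⁻¹) = 0 := by
  rw [inv_one_add_smul_sigmaPlus, one_fin_two]
  simp [trace_fin_two]

end Field

section Deriv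

variable {α c : 𝕜 → 𝕜}

theorem entrywiseDifferentiableAt_diagonal_inv_self (hα : DifferentiableAt 𝕜 α x)
    (hα0 : α x ≠ 0) : EntrywiseDifferentiableAt (fun z => diagonal ![(α z)⁻¹, α z]) x := by
  intro i j; fin_cases i <;> fin_cases j <;> simp [diagonal, hα, hα.fun_inv hα0]

theorem entrywiseDeriv_diagonal_inv_self (hα : DifferentiableAt 𝕜 α x) (hα0 : α x ≠ 0) :
    entrywiseDeriv (fun z => diagonal ![(α z)⁻¹, α z]) x
      = diagonal ![-deriv α x / α x ^ 2, deriv α x] := by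
  ext i j; fin_cases i <;> fin_cases j <;> simp [entrywiseDeriv, diagonal, hα, hα0]

theorem entrywiseDifferentiableAt_one_add_smul_sigmaPlus (hc : DifferentiableAt 𝕜 c x) :
    EntrywiseDifferentiableAt (fun z => 1 + c z • !![(0 : 𝕜), 1; 0, 0]) x := by
  intro i j; fin_cases i <;> fin_cases j <;> simp [hc]

theorem entrywiseDeriv_one_add_smul_sigmaPlus :
    entrywiseDeriv (fun z => 1 + c z • !![(0 : 𝕜), 1; 0, 0]) x = deriv c x • !![0, 1; 0, 0] := by
  ext i j; fin_cases i <;> fin_cases j <;> simp [entrywiseDeriv, one_apply]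

end Deriv

end Matrix

/-- The trace identity (6.2): for `χ(z) = Π(z) · α(z)^{-σ₃} · (I₂ + c(z)σ⁺)`,
`tr(χ'(λ)(σ₃ + 2c(λ)σ⁺)χ(λ)⁻¹) = tr(Π'(λ)σ₃Π(λ)⁻¹) - 2α'(λ)/α(λ)`. -/
theorem statement7 (lam : ℂ) (α c : ℂ → ℂ) (Pmat : ℂ → Matrix (Fin 2) (Fin 2) ℂ)
    (hα : DifferentiableAt ℂ α lam) (hc : DifferentiableAt ℂ c lam)
    (hP : ∀ i j, DifferentiableAt ℂ (fun z => Pmat z i j) lam)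
    (hα0 : α lam ≠ 0) (hPinv : IsUnit (Pmat lam))
    (χ : ℂ → Matrix (Fin 2) (Fin 2) ℂ)
    (hχ : ∀ z, χ z = Pmat z * Matrix.diagonal ![(α z)⁻¹, α z] *
      ((1 : Matrix (Fin 2) (Fin 2) ℂ) + c z • !![0, 1; 0, 0])) :
    IsUnit (χ lam) ∧
    Matrix.trace ((Matrix.of fun i j => deriv (fun z => χ z i j) lam) *
        ((!![1, 0; 0, -1] : Matrix (Fin 2) (Fin 2) ℂ) +
          (2 * c lam) • !![0, 1; 0, 0]) * (χ lam)⁻¹)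
      = Matrix.trace ((Matrix.of fun i j => deriv (fun z => Pmat z i j) lam) *
          (!![1, 0; 0, -1] : Matrix (Fin 2) (Fin 2) ℂ) * (Pmat lam)⁻¹)
        - 2 * deriv α lam / α lam := by
  have hDunit := isUnit_diagonal_inv_self hα0
  have hUunit := isUnit_one_add_smul_sigmaPlus (c lam)
  have hD := entrywiseDifferentiableAt_diagonal_inv_self hα hα0
  have hU := entrywiseDifferentiableAt_one_add_smul_sigmaPlus hc
  have hderiv : entrywiseDeriv χ lam
      = entrywiseDeriv Pmat lam * diagonal ![(α lam)⁻¹, α lam] * (1 + c lam • !![0, 1; 0, 0])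
        + Pmat lam * diagonal ![-deriv α lam / α lam ^ 2, deriv α lam]
          * (1 + c lam • !![0, 1; 0, 0])
        + Pmat lam * diagonal ![(α lam)⁻¹, α lam] * (deriv c lam • !![0, 1; 0, 0]) := by
    rw [funext hχ, entrywiseDeriv_mul (EntrywiseDifferentiableAt.mul hP hD) hU,
      entrywiseDeriv_mul hP hD, entrywiseDeriv_diagonal_inv_self hα hα0,
      entrywiseDeriv_one_add_smul_sigmaPlus, Matrix.add_mul]
  refine ⟨hχ lam ▸ (hPinv.mul hDunit).mul hUunit, ?_⟩
  change trace (entrywiseDeriv χ lam * _ * _) = trace (entrywiseDeriv Pmat lam * _ * _) - _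
  rw [hderiv, hχ lam, trace_productRule_mul_inv _ _ _ _ _ hPinv hDunit hUunit
      (one_add_smul_sigmaPlus_mul _) (diagonal_mul_sigma3_comm _),
    trace_diagonal_mul_sigma3_mul_inv hα0, trace_smul_sigmaPlus_mul_mul_inv]
  ring
end

section
/- Let λ ∈ ℂ. Let P : ℂ → ℂ and A : ℂ → M₂(ℂ) be complex-differentiable at λ, with A(λ) invertible. Define B(z) = A(z) · (I₂ + P(z)·σ⁺). Then B(λ) is invertible and tr( B′(λ) · σ₃ · B(λ)^{−1} ) = tr( A′(λ) · σ₃ · A(λ)^{−1} ) − 2·P(λ) · tr( A′(λ) · σ⁺ · A(λ)^{−1} ). -/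
/-!
Write `B = A U` with `U = I₂ + P σ⁺`. By the product rule `B' = A' U + A P' σ⁺`, and cyclicity of the
trace turns `tr(B' σ₃ B⁻¹)` into `tr(A' (U σ₃ U⁻¹) A⁻¹) + P' tr(σ⁺ σ₃ U⁻¹)`. Since `σ⁺² = 0` we have
`U⁻¹ = I₂ - P σ⁺`, whence `U σ₃ U⁻¹ = σ₃ - 2P σ⁺` and `σ⁺ σ₃ U⁻¹ = -σ⁺` is traceless.
-/

open Matrix

theorem hasDerivAt_matrix_mul_apply {𝕜 : Type*} [NontriviallyNormedField 𝕜]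
    {l m n : Type*} [Fintype m] {A : 𝕜 → Matrix l m 𝕜} {U : 𝕜 → Matrix m n 𝕜}
    {A' : Matrix l m 𝕜} {U' : Matrix m n 𝕜} {x : 𝕜}
    (hA : ∀ i j, HasDerivAt (fun z => A z i j) (A' i j) x)
    (hU : ∀ i j, HasDerivAt (fun z => U z i j) (U' i j) x) (i : l) (j : n) :
    HasDerivAt (fun z => (A z * U z) i j) ((A' * U x + A x * U') i j) x := by
  rw [Matrix.add_apply, mul_apply, mul_apply, ← Finset.sum_add_distrib]
  simp only [mul_apply]
  exact HasDerivAt.fun_sum fun k _ => (hA i k).fun_mul (hU k j)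

theorem trace_mul_add_mul_mul_mul_inv {n R : Type*} [Fintype n] [DecidableEq n] [CommRing R]
    {A : Matrix n n R} (hA : IsUnit A) (A' U U' T : Matrix n n R) :
    trace ((A' * U + A * U') * T * (A * U)⁻¹)
      = trace (A' * (U * T * U⁻¹) * A⁻¹) + trace (U' * T * U⁻¹) := by
  have hAA : A⁻¹ * A = 1 := nonsing_inv_mul A ((isUnit_iff_isUnit_det A).mp hA)
  rw [Matrix.mul_inv_rev, add_mul, add_mul, trace_add]
  congr 1
  · simp only [mul_assoc]
  · rw [mul_assoc A, mul_assoc A, trace_mul_comm A, mul_assoc, mul_assoc, mul_assoc, hAA,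
      mul_one, ← mul_assoc]

section PauliMatrices

variable {R : Type*} [CommRing R]

local notation "σ₃" => (!![1, 0; 0, -1] : Matrix (Fin 2) (Fin 2) R)
local notation "σ⁺" => (!![0, 1; 0, 0] : Matrix (Fin 2) (Fin 2) R)

theorem one_add_smul_sigmaPlus_mul_one_sub (p : R) : (1 + p • σ⁺) * (1 - p • σ⁺) = 1 := by
  simp [one_fin_two]

theorem one_add_smul_sigmaPlus_conj_sigma3 (p : R) :
    (1 + p • σ⁺) * σ₃ * (1 - p • σ⁺) = σ₃ - (2 * p) • σ⁺ := by
  simp [one_fin_two]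
  ring

theorem trace_sigmaPlus_mul_sigma3_mul_one_sub (p : R) :
    trace (σ⁺ * σ₃ * (1 - p • σ⁺)) = 0 := by
  simp [one_fin_two, trace_fin_two]

end PauliMatrices

/-- Jump formula for `tr(∂_λ B · σ₃ · B⁻¹)` with `B(z) = A(z)(I₂ + P(z)σ⁺)`:
it equals `tr(A'σ₃A⁻¹) - 2P(λ)·tr(A'σ⁺A⁻¹)`. -/
theorem statement8 (lam : ℂ) (P : ℂ → ℂ) (A : ℂ → Matrix (Fin 2) (Fin 2) ℂ)
    (hP : DifferentiableAt ℂ P lam)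
    (hA : ∀ i j, DifferentiableAt ℂ (fun z => A z i j) lam)
    (hAinv : IsUnit (A lam))
    (B : ℂ → Matrix (Fin 2) (Fin 2) ℂ)
    (hB : ∀ z, B z = A z * ((1 : Matrix (Fin 2) (Fin 2) ℂ) + P z • !![0, 1; 0, 0])) :
    IsUnit (B lam) ∧
    Matrix.trace ((Matrix.of fun i j => deriv (fun z => B z i j) lam) *
        (!![1, 0; 0, -1] : Matrix (Fin 2) (Fin 2) ℂ) * (B lam)⁻¹)
      = Matrix.trace ((Matrix.of fun i j => deriv (fun z => A z i j) lam) *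
          (!![1, 0; 0, -1] : Matrix (Fin 2) (Fin 2) ℂ) * (A lam)⁻¹)
        - 2 * P lam *
          Matrix.trace ((Matrix.of fun i j => deriv (fun z => A z i j) lam) *
            (!![0, 1; 0, 0] : Matrix (Fin 2) (Fin 2) ℂ) * (A lam)⁻¹) := by
  let σp : Matrix (Fin 2) (Fin 2) ℂ := !![0, 1; 0, 0]
  set A' : Matrix (Fin 2) (Fin 2) ℂ := of fun i j => deriv (fun z => A z i j) lam
  have hUinv : (1 + P lam • σp)⁻¹ = 1 - P lam • σp :=
    inv_eq_right_inv (one_add_smul_sigmaPlus_mul_one_sub _)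
  have hUunit : IsUnit (1 + P lam • σp) := (isUnit_iff_isUnit_det _).mpr
    (isUnit_det_of_right_inverse (one_add_smul_sigmaPlus_mul_one_sub _))
  have hUderiv : ∀ i j, HasDerivAt (fun z => (1 + P z • σp) i j) ((deriv P lam • σp) i j) lam :=
    fun i j => by
      simp only [Matrix.add_apply, Matrix.smul_apply, smul_eq_mul]
      exact (hP.hasDerivAt.mul_const _).const_add _
  have hBderiv : (of fun i j => deriv (fun z => B z i j) lam)
      = A' * (1 + P lam • σp) + A lam * (deriv P lam • σp) := by
    ext i j
    simp only [hB]
    exact (hasDerivAt_matrix_mul_apply (fun i j => (hA i j).hasDerivAt) hUderiv i j).deriv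
  refine ⟨hB lam ▸ hAinv.mul hUunit, ?_⟩
  rw [hBderiv, hB lam, trace_mul_add_mul_mul_mul_inv hAinv, hUinv,
    one_add_smul_sigmaPlus_conj_sigma3, smul_mul, smul_mul, trace_smul,
    trace_sigmaPlus_mul_sigma3_mul_one_sub, smul_zero, add_zero, mul_sub, sub_mul, Matrix.mul_smul,
    smul_mul, trace_sub, trace_smul, smul_eq_mul]
end

section
/- Let λ ∈ ℂ. Let P : ℂ → ℂ and A : ℂ → M₂(ℂ) be complex-differentiable at λ, with A(λ) invertible. Define B(z) = A(z) · (I₂ + P(z)·σ⁺). Then tr( B′(λ) · σ⁺ · B(λ)^{−1} ) = tr( A′(λ) · σ⁺ · A(λ)^{−1} ). -/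
/-- No discontinuity of `tr(∂_λ B · σ⁺ · B⁻¹)` across a jump `B(z) = A(z)(I₂ + P(z)σ⁺)`:
it equals `tr(A'σ⁺A⁻¹)`. -/
theorem statement9 (lam : ℂ) (P : ℂ → ℂ) (A : ℂ → Matrix (Fin 2) (Fin 2) ℂ)
    (hP : DifferentiableAt ℂ P lam)
    (hA : ∀ i j, DifferentiableAt ℂ (fun z => A z i j) lam)
    (hAinv : IsUnit (A lam))
    (B : ℂ → Matrix (Fin 2) (Fin 2) ℂ)
    (hB : ∀ z, B z = A z * ((1 : Matrix (Fin 2) (Fin 2) ℂ) + P z • !![0, 1; 0, 0])) :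
    Matrix.trace ((Matrix.of fun i j => deriv (fun z => B z i j) lam) *
        (!![0, 1; 0, 0] : Matrix (Fin 2) (Fin 2) ℂ) * (B lam)⁻¹)
      = Matrix.trace ((Matrix.of fun i j => deriv (fun z => A z i j) lam) *
          (!![0, 1; 0, 0] : Matrix (Fin 2) (Fin 2) ℂ) * (A lam)⁻¹) := by
  have hU : ∀ z, (1 : Matrix (Fin 2) (Fin 2) ℂ) + P z • !![(0:ℂ), 1; 0, 0]
      = !![1, P z; 0, 1] := by
    intro z
    ext i j
    fin_cases i <;> fin_cases j <;>
      simp [Matrix.one_apply]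
  have hB0 : ∀ i, (fun z => B z i 0) = fun z => A z i 0 := by
    intro i
    funext z
    rw [hB, hU]
    fin_cases i <;> simp [Matrix.mul_apply, Fin.sum_univ_two]
  have key : (Matrix.of fun i j => deriv (fun z => B z i j) lam) *
      (!![0, 1; 0, 0] : Matrix (Fin 2) (Fin 2) ℂ)
      = (Matrix.of fun i j => deriv (fun z => A z i j) lam) *
        (!![0, 1; 0, 0] : Matrix (Fin 2) (Fin 2) ℂ) := by
    ext i j
    fin_cases j
    · simp [Matrix.mul_apply, Fin.sum_univ_two]
    · simp [Matrix.mul_apply, Fin.sum_univ_two, hB0 i]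
  have hUinv : (!![1, P lam; 0, 1] : Matrix (Fin 2) (Fin 2) ℂ)⁻¹
      = !![1, -P lam; 0, 1] := by
    apply Matrix.inv_eq_right_inv
    ext i j
    fin_cases i <;> fin_cases j <;>
      simp [Matrix.mul_apply, Fin.sum_univ_two, Matrix.one_apply]
  have hBinv : (B lam)⁻¹ = !![1, -P lam; 0, 1] * (A lam)⁻¹ := by
    rw [hB, hU, Matrix.mul_inv_rev, hUinv]
  have hσU : (!![0, 1; 0, 0] : Matrix (Fin 2) (Fin 2) ℂ) * !![1, -P lam; 0, 1]
      = !![0, 1; 0, 0] := by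
    ext i j
    fin_cases i <;> fin_cases j <;>
      simp [Matrix.mul_apply, Fin.sum_univ_two]
  rw [key, hBinv, mul_assoc, ← mul_assoc (!![(0:ℂ), 1; 0, 0]), hσU, ← mul_assoc]
end

section
/- Let m > 0 and let (F_N)_{N≥1} be complex numbers with |F_N| ≤ m^N for every N ≥ 1. Then the series A(γ) = Σ_{N≥1} F_N γ^N converges for |γ| < 1/m and defines a holomorphic function there, the composition γ ↦ exp(A(γ)) is holomorphic on the disc |γ| < 1/m, and for every integer n ≥ 0 its n-th derivative at γ = 0 satisfies the bound |(d^n/dγ^n) exp(A(γ)) |_{γ=0}| ≤ (4m)^n · (d^n/dt^n) exp(1/(2−t)) |_{t=0}, where the right-hand side is the n-th derivative at 0 of the real-analytic function t ↦ exp(1/(2−t)) (a nonnegative real number). -/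
/-!
By Faà di Bruno's formula the `n`-th Taylor coefficient of a composition of power series is a
sum over the compositions of `n`, each term being a product of one outer and several inner
coefficients (all inner indices `≥ 1`). So coefficientwise bounds by a majorant pair pass to the
composition. Here `exp (1 / (2 - t))` is `exp` expanded at `1/2`, with coefficients
`exp (1/2) / k! ≥ 1 / k!`, composed with `1 / (2 - t) = ∑ 2⁻¹ ^ (k + 1) t ^ k`, and
`|F_k| ≤ m ^ k ≤ (4m) ^ k 2⁻¹ ^ (k + 1)` for `k ≥ 1`; the weights `(4m) ^ k` multiply to `(4m) ^ n`.
-/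

open FormalMultilinearSeries Nat

namespace FormalMultilinearSeries

variable {𝕜 : Type*} [NontriviallyNormedField 𝕜]

theorem coeff_ofScalars_comp (d c : ℕ → 𝕜) (n : ℕ) :
    ((ofScalars 𝕜 d).comp (ofScalars 𝕜 c)).coeff n =
      ∑ co : Composition n, d co.length * ∏ i, c (co.blocksFun i) := by
  rw [coeff, FormalMultilinearSeries.comp, _root_.sum_apply]
  refine Finset.sum_congr rfl fun co _ => ?_
  rw [compAlongComposition_apply]
  have : (ofScalars 𝕜 c).applyComposition co 1 = fun i => c (co.blocksFun i) := by
    funext i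
    simp [applyComposition, ofScalars, List.prod_ofFn]
  simp [this, ofScalars, List.prod_ofFn]

theorem norm_coeff_ofScalars_comp_le {d c : ℕ → 𝕜} {D C : ℕ → ℝ} {R : ℝ}
    (hd : ∀ k, ‖d k‖ ≤ D k) (hc : ∀ k, 1 ≤ k → ‖c k‖ ≤ R ^ k * C k)
    (n : ℕ) :
    ‖((ofScalars 𝕜 d).comp (ofScalars 𝕜 c)).coeff n‖ ≤
      R ^ n * ((ofScalars ℝ D).comp (ofScalars ℝ C)).coeff n := by
  rw [coeff_ofScalars_comp, coeff_ofScalars_comp, Finset.mul_sum]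
  refine (norm_sum_le _ _).trans (Finset.sum_le_sum fun co _ => ?_)
  have hprod : ∏ i, ‖c (co.blocksFun i)‖ ≤ R ^ n * ∏ i, C (co.blocksFun i) := by
    calc ∏ i, ‖c (co.blocksFun i)‖ ≤ ∏ i, R ^ co.blocksFun i * C (co.blocksFun i) :=
          Finset.prod_le_prod (fun _ _ => norm_nonneg _)
            fun i _ => hc _ (co.one_le_blocksFun i)
      _ = R ^ n * ∏ i, C (co.blocksFun i) := by
          rw [Finset.prod_mul_distrib, Finset.prod_pow_eq_pow_sum, co.sum_blocksFun]
  rw [norm_mul, norm_prod, mul_left_comm]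
  exact mul_le_mul (hd _) hprod (Finset.prod_nonneg fun _ _ => norm_nonneg _)
    ((norm_nonneg _).trans (hd _))

end FormalMultilinearSeries

theorem HasFPowerSeriesAt.iteratedDeriv_eq_factorial_mul_coeff {𝕜 : Type*}
    [NontriviallyNormedField 𝕜] [CompleteSpace 𝕜] [CharZero 𝕜] {f : 𝕜 → 𝕜}
    {p : FormalMultilinearSeries 𝕜 𝕜 𝕜} {x : 𝕜} (h : HasFPowerSeriesAt f p x) (n : ℕ) :
    iteratedDeriv n f x = n ! * p.coeff n := by
  rw [h.eq_formalMultilinearSeries h.analyticAt.hasFPowerSeriesAt, coeff_ofScalars,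
    mul_div_cancel₀ _ (by exact_mod_cast n.factorial_ne_zero)]

theorem norm_iteratedDeriv_le_of_norm_coeff_le {𝕜 : Type*} [RCLike 𝕜] {f : 𝕜 → 𝕜}
    {g : ℝ → ℝ} {p : FormalMultilinearSeries 𝕜 𝕜 𝕜} {P : FormalMultilinearSeries ℝ ℝ ℝ}
    (hf : HasFPowerSeriesAt f p 0) (hg : HasFPowerSeriesAt g P 0) {R : ℝ} {n : ℕ}
    (h : ‖p.coeff n‖ ≤ R ^ n * P.coeff n) :
    ‖iteratedDeriv n f 0‖ ≤ R ^ n * iteratedDeriv n g 0 := by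
  rw [hf.iteratedDeriv_eq_factorial_mul_coeff, hg.iteratedDeriv_eq_factorial_mul_coeff, norm_mul,
    RCLike.norm_natCast, mul_left_comm]
  exact mul_le_mul_of_nonneg_left h (by positivity)

theorem hasFPowerSeriesAt_exp {𝕂 : Type*} [RCLike 𝕂] (x : 𝕂) :
    HasFPowerSeriesAt NormedSpace.exp
      (ofScalars 𝕂 fun k => NormedSpace.exp x * (k ! : 𝕂)⁻¹) x := by
  refine hasFPowerSeriesAt_iff.2 (Filter.Eventually.of_forall fun z => ?_)
  rw [NormedSpace.exp_add]
  refine ((NormedSpace.exp_series_hasSum_exp' (𝕂 := 𝕂) z).mul_left _).congr_fun fun k => ?_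
  simp only [coeff_ofScalars, smul_eq_mul]
  ring

theorem hasFPowerSeriesAt_inv_sub {𝕜 : Type*} [NontriviallyNormedField 𝕜] {r : 𝕜} (hr : r ≠ 0) :
    HasFPowerSeriesAt (fun t => (r - t)⁻¹) (ofScalars 𝕜 fun k => r⁻¹ ^ (k + 1)) 0 := by
  refine hasFPowerSeriesAt_iff.2 ?_
  filter_upwards [Metric.ball_mem_nhds (0 : 𝕜) (norm_pos_iff.2 hr)] with z hz
  have hz' : ‖r⁻¹ * z‖ < 1 := by
    rw [norm_mul, norm_inv, inv_mul_lt_one₀ (norm_pos_iff.2 hr)]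
    simpa using hz
  have := (hasSum_geometric_of_norm_lt_one hz').mul_left r⁻¹
  rw [zero_add, show (r - z)⁻¹ = r⁻¹ * (1 - r⁻¹ * z)⁻¹ by field_simp]
  refine this.congr_fun fun k => ?_
  simp only [coeff_ofScalars, smul_eq_mul]
  ring

theorem pow_le_four_mul_pow_mul_half_pow {m : ℝ} (hm : 0 ≤ m) {k : ℕ} (hk : 1 ≤ k) :
    m ^ k ≤ (4 * m) ^ k * (1 / 2) ^ (k + 1) := by
  obtain ⟨j, rfl⟩ := Nat.exists_eq_add_of_le' hk
  have : (4 * m) ^ (j + 1) * (1 / 2 : ℝ) ^ (j + 1 + 1) = m ^ (j + 1) * 2 ^ j := by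
    rw [div_pow, one_pow, mul_pow, show (4 : ℝ) = 2 ^ 2 by norm_num, ← pow_mul]
    field_simp
    ring
  rw [this]
  exact le_mul_of_one_le_right (by positivity) (one_le_pow₀ one_le_two)

section TsumSuccMulPowSucc

variable {𝕜 : Type*} [NontriviallyNormedField 𝕜] {m : ℝ}

theorem le_radius_ofScalars_of_norm_le_pow (hm : 0 < m) {c : ℕ → 𝕜}
    (hc : ∀ n, ‖c n‖ ≤ m ^ n) : ENNReal.ofReal (1 / m) ≤ (ofScalars 𝕜 c).radius := by
  rw [← ENNReal.ofNNReal_toNNReal]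
  refine le_radius_of_bound _ 1 fun n => ?_
  rw [ofScalars_norm, Real.coe_toNNReal _ (by positivity)]
  calc ‖c n‖ * (1 / m) ^ n ≤ m ^ n * (1 / m) ^ n := by gcongr; exact hc n
    _ = 1 := by rw [← mul_pow, mul_one_div_cancel hm.ne', one_pow]

variable [CompleteSpace 𝕜]

theorem summable_succ_mul_pow_succ (hm : 0 < m) {F : ℕ → 𝕜} (hF : ∀ N, 1 ≤ N → ‖F N‖ ≤ m ^ N)
    {z : 𝕜} (hz : ‖z‖ < 1 / m) : Summable fun N => F (N + 1) * z ^ (N + 1) := by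
  have hmz : m * ‖z‖ < 1 := by rwa [lt_div_iff₀' hm] at hz
  refine .of_norm_bounded ((summable_nat_add_iff 1).2
    (summable_geometric_of_lt_one (by positivity) hmz)) fun N => ?_
  rw [norm_mul, norm_pow, mul_pow]
  exact mul_le_mul_of_nonneg_right (hF _ N.succ_pos) (by positivity)

theorem hasFPowerSeriesOnBall_tsum_succ_mul_pow_succ (hm : 0 < m) {F : ℕ → 𝕜}
    (hF : ∀ N, 1 ≤ N → ‖F N‖ ≤ m ^ N) :
    HasFPowerSeriesOnBall (fun z => ∑' N, F (N + 1) * z ^ (N + 1))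
      (ofScalars 𝕜 fun n => if n = 0 then 0 else F n) 0 (ENNReal.ofReal (1 / m)) where
  r_le := le_radius_ofScalars_of_norm_le_pow hm fun n => by
    rcases n with _ | n
    · simp
    · simpa using hF _ n.succ_pos
  r_pos := by simpa using hm
  hasSum {z} hz := by
    rw [Metric.eball_ofReal, mem_ball_zero_iff] at hz
    rw [← hasSum_nat_add_iff' 1]
    simpa [ofScalars_apply_eq, mul_comm] using (summable_succ_mul_pow_succ hm hF hz).hasSum

end TsumSuccMulPowSucc

theorem hasFPowerSeriesAt_exp_one_div_two_sub :
    HasFPowerSeriesAt (fun t : ℝ => Real.exp (1 / (2 - t)))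
      ((ofScalars ℝ fun k => Real.exp (1 / 2) * (k ! : ℝ)⁻¹).comp
        (ofScalars ℝ fun k => (1 / 2 : ℝ) ^ (k + 1))) 0 := by
  have hinv : HasFPowerSeriesAt (fun t : ℝ => 1 / (2 - t))
      (ofScalars ℝ fun k => (1 / 2 : ℝ) ^ (k + 1)) 0 := by
    simpa only [one_div] using hasFPowerSeriesAt_inv_sub two_ne_zero
  have hexp : HasFPowerSeriesAt Real.exp (ofScalars ℝ fun k => Real.exp (1 / 2) * (k ! : ℝ)⁻¹)
      (1 / (2 - 0)) := by
    rw [sub_zero, Real.exp_eq_exp_ℝ]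
    exact hasFPowerSeriesAt_exp _
  exact hexp.comp (f := fun t : ℝ => 1 / (2 - t)) hinv

/-- The Faà di Bruno-type estimate from the proof of Lemma 6.2: if `|F_N| ≤ m^N`
for `N ≥ 1`, then `A(γ) = Σ_{N≥1} F_N γ^N` converges and is holomorphic on
`|γ| < 1/m`, so is `exp(A(γ))`, and the `n`-th derivative of `exp(A(γ))` at `γ = 0`
is bounded by `(4m)^n · (dⁿ/dtⁿ) exp(1/(2-t))|_{t=0}`. -/
theorem statement10 (m : ℝ) (hm : 0 < m) (F : ℕ → ℂ)
    (hF : ∀ N : ℕ, 1 ≤ N → ‖F N‖ ≤ m ^ N) :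
    (∀ γ : ℂ, ‖γ‖ < 1 / m →
      Summable (fun N : ℕ => F (N + 1) * γ ^ (N + 1))) ∧
    DifferentiableOn ℂ (fun γ : ℂ => ∑' N : ℕ, F (N + 1) * γ ^ (N + 1))
      (Metric.ball 0 (1 / m)) ∧
    DifferentiableOn ℂ
      (fun γ : ℂ => Complex.exp (∑' N : ℕ, F (N + 1) * γ ^ (N + 1)))
      (Metric.ball 0 (1 / m)) ∧
    ∀ n : ℕ,
      ‖iteratedDeriv n
          (fun γ : ℂ => Complex.exp (∑' N : ℕ, F (N + 1) * γ ^ (N + 1))) 0‖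
        ≤ (4 * m) ^ n * iteratedDeriv n (fun t : ℝ => Real.exp (1 / (2 - t))) 0 := by
  set A : ℂ → ℂ := fun γ => ∑' N : ℕ, F (N + 1) * γ ^ (N + 1)
  have hA : HasFPowerSeriesOnBall A _ 0 _ := hasFPowerSeriesOnBall_tsum_succ_mul_pow_succ hm hF
  have hdiffA := hA.differentiableOn
  rw [Metric.eball_ofReal] at hdiffA
  refine ⟨fun _ => summable_succ_mul_pow_succ hm hF, hdiffA, hdiffA.cexp, fun n => ?_⟩
  have hexp : HasFPowerSeriesAt Complex.exp (ofScalars ℂ fun k => (k ! : ℂ)⁻¹)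
      (A 0) := by
    simpa [A, ← Complex.exp_eq_exp_ℂ] using hasFPowerSeriesAt_exp (𝕂 := ℂ) 0
  have hexpA := hexp.comp (f := A) hA.hasFPowerSeriesAt
  refine norm_iteratedDeriv_le_of_norm_coeff_le hexpA hasFPowerSeriesAt_exp_one_div_two_sub
    (norm_coeff_ofScalars_comp_le (fun k => ?_) (fun k hk => ?_) n)
  · rw [norm_inv, Complex.norm_natCast]
    exact le_mul_of_one_le_left (by positivity) (Real.one_le_exp (by norm_num))
  · simpa [if_neg (by omega : k ≠ 0)] using
      (hF k hk).trans (pow_le_four_mul_pow_mul_half_pow hm.le hk)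
end
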